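/- Let q ∈ k(x)[y] be square-free of degree r ≥ 1 in y with q_y = ∂q/∂y. For every a ∈ k(x)[y] with deg_y a < r, there exist unique polynomials A, ρ ∈ k(x)[y] of y-degree < r such that q_x·a = q·∂_y(A) − q_y·A + q·ρ, where q_x = ∂q/∂x; equivalently q_x a/q² = ∂_y(A/q) + ρ/q. Moreover, the square 2r×2r matrix M (over k(x), with polynomial entries in x when q ∈ k[x,y]) expressing the k(x)-linear map (A, ρ) ↦ q·∂_y(A) − q_y·A + q·ρ on coefficient vectors is invertible. -/

import Mathlib

open Polynomial

noncomputable section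

/-- Normalization on a field: every nonzero element normalizes to `1`. -/
noncomputable def fieldNormalizationMonoid (K : Type*) [Field K] : NormalizationMonoid K := by
  classical
  exact
  { normUnit := fun a => if h : a = 0 then 1 else (Units.mk0 a h)⁻¹
    normUnit_zero := dif_pos rfl
    normUnit_one := by
      rw [dif_neg one_ne_zero]
      exact Units.ext (by simp)
    normUnit_mul_units := fun {a} u ha => by
      rw [dif_neg (mul_ne_zero ha u.ne_zero), dif_neg ha]
      exact Units.ext (by
        simp only [Units.val_inv_eq_inv_val, Units.val_mk0, Units.val_mul, mul_inv_rev]) }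

attribute [local instance] fieldNormalizationMonoid

noncomputable local instance (K : Type*) [Field K] : NormalizedGCDMonoid (Polynomial K) :=
  UniqueFactorizationMonoid.toNormalizedGCDMonoid _

variable {k : Type*} [Field k] [CharZero k]

/-- The ℓ-th determinantal denominator of a rational matrix: the monic least common
denominator of all minors of size at most ℓ. -/
def detDen {n p : ℕ} (R : Matrix (Fin n) (Fin p) (RatFunc k)) (ℓ : ℕ) : Polynomial k :=
  (Finset.range (ℓ + 1)).lcm fun i =>
    (Finset.univ : Finset ((Fin i ↪ Fin n) × (Fin i ↪ Fin p))).lcm fun fg =>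
      (Matrix.det fun a b => R (fg.1 a) (fg.2 b)).denom

/-- Derivative of a rational function. -/
def rfDeriv (f : RatFunc k) : RatFunc k :=
  algebraMap (Polynomial k) (RatFunc k)
      (Polynomial.derivative f.num * f.denom - f.num * Polynomial.derivative f.denom) /
    algebraMap (Polynomial k) (RatFunc k) (f.denom ^ 2)

/-- The derivation `p(x) d/dx` on `k(x)`. -/
def pDeriv (p : Polynomial k) (f : RatFunc k) : RatFunc k :=
  algebraMap (Polynomial k) (RatFunc k) p * rfDeriv f

/-- Entrywise action of the derivation `p(x) d/dx` on vectors. -/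
def pDerivVec {n : ℕ} (p : Polynomial k) (v : Fin n → RatFunc k) : Fin n → RatFunc k :=
  fun i => pDeriv p (v i)

/-- The pseudo-linear map `θ = D + T` on `k(x)^n`, `θ(v) = D(v) + T v`. -/
def pseudoLinDiff {n : ℕ} (p : Polynomial k) (T : Matrix (Fin n) (Fin n) (RatFunc k))
    (v : Fin n → RatFunc k) : Fin n → RatFunc k :=
  pDerivVec p v + T.mulVec v

/-- The derivative with respect to `x` of a polynomial in `y` over `k(x)`
(coefficientwise derivative). -/
def derivX (q : Polynomial (RatFunc k)) : Polynomial (RatFunc k) :=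
  q.sum fun i a => Polynomial.C (rfDeriv a) * Polynomial.X ^ i

/-!
Write `n = deg q`. The map `(A, ρ) ↦ q A' - q' A + q ρ` sends pairs of polynomials of degree `< n`
to polynomials of degree `< 2n`, a linear map between spaces of equal dimension `2n`. It is
injective: if `q A' - q' A + q ρ = 0` then `q ∣ q' A`, so `q ∣ A` because `q` is coprime to `q'`,
and `deg A < n` forces `A = 0`, whence `q ρ = 0`. Hence it is bijective, which is the second claim;
the first is its instance `b = q_x a`, which has degree `< 2n` since `deg q_x ≤ n`.
-/

namespace Polynomial

section Semiring

variable {R : Type*} [Semiring R]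

lemma degree_mul_lt_two_mul {p A : R[X]} {n : ℕ} (hp : p.degree ≤ n) (hA : A.degree < n) :
    (p * A).degree < (2 * n : ℕ) :=
  calc (p * A).degree ≤ p.degree + A.degree := degree_mul_le _ _
    _ ≤ n + A.degree := by gcongr
    _ < n + n := WithBot.add_lt_add_left (WithBot.natCast_ne_bot n) hA
    _ = (2 * n : ℕ) := by push_cast; ring

end Semiring

variable {K : Type*} [Field K]

/-- `(A, ρ) ↦ q A' - q' A + q ρ`; this is the numerator of `(A / q)' + ρ / q` over `q ^ 2`. -/
def hermiteMap (q : K[X]) : K[X] × K[X] →ₗ[K] K[X] where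
  toFun Aρ := q * derivative Aρ.1 - derivative q * Aρ.1 + q * Aρ.2
  map_add' x y := by
    simp only [Prod.fst_add, Prod.snd_add, derivative_add]
    ring
  map_smul' c x := by
    simp only [Prod.smul_fst, Prod.smul_snd, smul_eq_C_mul, derivative_C_mul, RingHom.id_apply]
    ring

lemma hermiteMap_apply (q A ρ : K[X]) :
    hermiteMap q (A, ρ) = q * derivative A - derivative q * A + q * ρ := rfl

lemma hermiteMap_mem_degreeLT {q A ρ : K[X]} (hA : A ∈ degreeLT K q.natDegree)
    (hρ : ρ ∈ degreeLT K q.natDegree) : hermiteMap q (A, ρ) ∈ degreeLT K (2 * q.natDegree) := by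
  rw [mem_degreeLT] at hA hρ ⊢
  have hq : q.degree ≤ q.natDegree := degree_le_natDegree
  have hA' : (derivative A).degree < q.natDegree := degree_derivative_le.trans_lt hA
  refine (degree_add_le _ _).trans_lt (max_lt ((degree_sub_le _ _).trans_lt (max_lt ?_ ?_)) ?_)
  · exact degree_mul_lt_two_mul hq hA'
  · exact degree_mul_lt_two_mul (degree_derivative_le.trans hq) hA
  · exact degree_mul_lt_two_mul hq hρ

lemma eq_zero_of_hermiteMap_eq_zero {q A ρ : K[X]} (hsqf : IsCoprime q (derivative q))
    (hA : A ∈ degreeLT K q.natDegree) (h : hermiteMap q (A, ρ) = 0) : A = 0 ∧ ρ = 0 := by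
  have hq : q ≠ 0 := by
    rintro rfl
    exact not_isCoprime_zero_zero (by simpa using hsqf)
  rw [mem_degreeLT, ← degree_eq_natDegree hq] at hA
  rw [hermiteMap_apply] at h
  have hdvd : q ∣ derivative q * A := ⟨derivative A + ρ, by linear_combination -h⟩
  have hA0 : A = 0 := eq_zero_of_dvd_of_degree_lt (hsqf.dvd_of_dvd_mul_left hdvd) hA
  subst hA0
  exact ⟨rfl, (mul_eq_zero.mp (by simpa using h)).resolve_left hq⟩

def hermiteMapRestrict (q : K[X]) :
    degreeLT K q.natDegree × degreeLT K q.natDegree →ₗ[K] degreeLT K (2 * q.natDegree) :=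
  LinearMap.codRestrict _
    ((hermiteMap q).comp ((degreeLT K _).subtype.prodMap (degreeLT K _).subtype))
    fun x => hermiteMap_mem_degreeLT x.1.2 x.2.2

lemma finrank_degreeLT (n : ℕ) : Module.finrank K (degreeLT K n) = n := by
  rw [(degreeLTEquiv K n).finrank_eq, Module.finrank_fin_fun]

lemma hermiteMapRestrict_injective {q : K[X]} (hsqf : IsCoprime q (derivative q)) :
    Function.Injective (hermiteMapRestrict q) := by
  rw [← LinearMap.ker_eq_bot, LinearMap.ker_eq_bot']
  rintro ⟨⟨A, hA⟩, ⟨ρ, hρ⟩⟩ h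
  obtain ⟨rfl, rfl⟩ := eq_zero_of_hermiteMap_eq_zero hsqf hA (congrArg Subtype.val h)
  rfl

lemma hermiteMapRestrict_bijective {q : K[X]} (hsqf : IsCoprime q (derivative q)) :
    Function.Bijective (hermiteMapRestrict q) := by
  have : FiniteDimensional K (degreeLT K q.natDegree) :=
    (degreeLTEquiv K _).symm.finiteDimensional
  have : FiniteDimensional K (degreeLT K (2 * q.natDegree)) :=
    (degreeLTEquiv K _).symm.finiteDimensional
  have hrank : Module.finrank K (degreeLT K q.natDegree × degreeLT K q.natDegree) =
      Module.finrank K (degreeLT K (2 * q.natDegree)) := by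
    rw [Module.finrank_prod, finrank_degreeLT, finrank_degreeLT, two_mul]
  have hinj := hermiteMapRestrict_injective hsqf
  exact ⟨hinj, (LinearMap.injective_iff_surjective_of_finrank_eq_finrank hrank).mp hinj⟩

theorem existsUnique_hermiteMap_eq {q b : K[X]} (hsqf : IsCoprime q (derivative q))
    (hb : b ∈ degreeLT K (2 * q.natDegree)) :
    ∃! Aρ : K[X] × K[X], (Aρ.1 ∈ degreeLT K q.natDegree ∧ Aρ.2 ∈ degreeLT K q.natDegree) ∧
      hermiteMap q Aρ = b := by
  obtain ⟨⟨A, ρ⟩, hAρ⟩ := (hermiteMapRestrict_bijective hsqf).2 ⟨b, hb⟩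
  refine ⟨(A, ρ), ⟨⟨A.2, ρ.2⟩, congrArg Subtype.val hAρ⟩, ?_⟩
  rintro ⟨A', ρ'⟩ ⟨⟨hA', hρ'⟩, h⟩
  have hdiff : hermiteMap q (A' - A, ρ' - ρ) = 0 := by
    rw [← Prod.mk_sub_mk, map_sub, h, hermiteMap_apply]
    exact sub_eq_zero.mpr (congrArg Subtype.val hAρ).symm
  obtain ⟨hA, hρ⟩ := eq_zero_of_hermiteMap_eq_zero hsqf (sub_mem hA' A.2) hdiff
  rw [sub_eq_zero] at hA hρ
  exact Prod.ext hA hρ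

end Polynomial

lemma degree_derivX_le {k : Type*} [Field k] (q : (RatFunc k)[X]) :
    (derivX q).degree ≤ q.natDegree := by
  refine (degree_sum_le _ _).trans (Finset.sup_le fun i hi => ?_)
  exact (degree_C_mul_X_pow_le _ _).trans (by exact_mod_cast le_natDegree_of_mem_supp i hi)

theorem hermite_reduction_step_general (q : Polynomial (RatFunc k)) (r : ℕ)
    (hdeg : q.natDegree = r) (hsqf : IsCoprime q (Polynomial.derivative q)) :
    (∀ a : Polynomial (RatFunc k), a.degree < (r : ℕ) →
      ∃! Aρ : Polynomial (RatFunc k) × Polynomial (RatFunc k),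
        (Aρ.1.degree < (r : ℕ) ∧ Aρ.2.degree < (r : ℕ)) ∧
          derivX q * a =
            q * Polynomial.derivative Aρ.1 - Polynomial.derivative q * Aρ.1 + q * Aρ.2) ∧
    (∀ b : Polynomial (RatFunc k), b.degree < ((2 * r : ℕ) : WithBot ℕ) →
      ∃! Aρ : Polynomial (RatFunc k) × Polynomial (RatFunc k),
        (Aρ.1.degree < (r : ℕ) ∧ Aρ.2.degree < (r : ℕ)) ∧
          q * Polynomial.derivative Aρ.1 - Polynomial.derivative q * Aρ.1 + q * Aρ.2 = b) := by
  subst hdeg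
  have hsolve (b : (RatFunc k)[X]) (hb : b.degree < (2 * q.natDegree : ℕ)) :=
    existsUnique_hermiteMap_eq hsqf (mem_degreeLT.mpr hb)
  simp only [mem_degreeLT] at hsolve
  refine ⟨fun a ha => ?_, hsolve⟩
  have hb := degree_mul_lt_two_mul (degree_derivX_le q) ha
  exact (existsUnique_congr fun _ => and_congr_right' eq_comm).mp (hsolve _ hb)

/-- One step of Hermite reduction: for `q ∈ k(x)[y]` square-free of `y`-degree `r ≥ 1` and any
`a` with `deg_y a < r`, there are unique `A, ρ` of `y`-degree `< r` with
`q_x·a = q·∂_y(A) − q_y·A + q·ρ`; moreover the underlying `2r × 2r` linear map is invertible,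
i.e. the same unique solvability holds for every right-hand side of `y`-degree `< 2r`. -/
theorem hermite_reduction_step (q : Polynomial (RatFunc k)) (r : ℕ) (hr : 1 ≤ r)
    (hdeg : q.natDegree = r) (hsqf : IsCoprime q (Polynomial.derivative q)) :
    (∀ a : Polynomial (RatFunc k), a.degree < (r : ℕ) →
      ∃! Aρ : Polynomial (RatFunc k) × Polynomial (RatFunc k),
        (Aρ.1.degree < (r : ℕ) ∧ Aρ.2.degree < (r : ℕ)) ∧
          derivX q * a =
            q * Polynomial.derivative Aρ.1 - Polynomial.derivative q * Aρ.1 + q * Aρ.2) ∧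
    (∀ b : Polynomial (RatFunc k), b.degree < ((2 * r : ℕ) : WithBot ℕ) →
      ∃! Aρ : Polynomial (RatFunc k) × Polynomial (RatFunc k),
        (Aρ.1.degree < (r : ℕ) ∧ Aρ.2.degree < (r : ℕ)) ∧
          q * Polynomial.derivative Aρ.1 - Polynomial.derivative q * Aρ.1 + q * Aρ.2 = b) :=
  hermite_reduction_step_general q r hdeg hsqf
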